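/- Player 2 needs memory in average-energy games with lower-bounded energy: consider the game G with player-1 states s₁, s₃ and player-2 state s₂, and edges s₁ → s₂ of weight 1, s₂ → s₂ of weight 0, s₂ → s₃ of weight −1, s₃ → s₃ of weight −1, and s₃ → s₂ of weight 2; let the objective be W = Lower(0) ∩ AvgEnergyLevel(1) from s₁. Then: (i) no memoryless strategy of player 2 is winning from s₁ (for every memoryless strategy of player 2 there is a consistent play from s₁ lying in W); and (ii) player 2 has a winning strategy from s₁ (a strategy such that every consistent play from s₁ lies outside W). -/

import Mathlib

open Filter

noncomputable section

/-- A two-player turn-based game on a (finite) state space `S`: `p1 s` holds iff state `s`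
belongs to player 1 (otherwise it belongs to player 2), `E` is the edge relation (every state
has a successor), and `w` assigns an integer weight to every edge. -/
structure Game (S : Type) where
  p1 : S → Prop
  E : S → S → Prop
  w : S → S → ℤ
  succ : ∀ s, ∃ t, E s t

variable {S : Type}

/-- `π` is a play of `G` starting from `s₀`. -/
def IsPlay (G : Game S) (s₀ : S) (π : ℕ → S) : Prop :=
  π 0 = s₀ ∧ ∀ n, G.E (π n) (π (n + 1))

/-- Energy level of the play `π` at position `n`. -/
def ELp (G : Game S) (π : ℕ → S) (n : ℕ) : ℤ :=
  ∑ i ∈ Finset.range n, G.w (π i) (π (i + 1))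

/-- Average-energy of a play (limsup variant), in the extended reals. -/
def AEsupP (G : Game S) (π : ℕ → S) : EReal :=
  limsup (fun n : ℕ => (((∑ i ∈ Finset.range n, (ELp G π (i + 1) : ℝ)) / n : ℝ) : EReal)) atTop

/-- Average-energy of a play (liminf variant). -/
def AEinfP (G : Game S) (π : ℕ → S) : EReal :=
  liminf (fun n : ℕ => (((∑ i ∈ Finset.range n, (ELp G π (i + 1) : ℝ)) / n : ℝ) : EReal)) atTop

/-- Mean-payoff of a play (limsup variant). -/
def MPsupP (G : Game S) (π : ℕ → S) : EReal :=
  limsup (fun n : ℕ => (((ELp G π n : ℝ) / n : ℝ) : EReal)) atTop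

/-- Total-payoff of a play (limsup variant). -/
def TPsupP (G : Game S) (π : ℕ → S) : EReal :=
  limsup (fun n : ℕ => ((ELp G π n : ℝ) : EReal)) atTop

/-- The history (finite prefix) `π 0, …, π n` of a play, as a list. -/
def hist (π : ℕ → S) (n : ℕ) : List S := List.ofFn (fun i : Fin (n + 1) => π i)

/-- A (deterministic) strategy for player 1: on every nonempty finite path of `G` ending in a
player-1 state, it prescribes an `E`-successor of the last state. -/
def IsStrat1 (G : Game S) (σ : List S → S) : Prop :=
  ∀ (ρ : List S) (h : ρ ≠ []), List.Chain' G.E ρ → G.p1 (ρ.getLast h) →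
    G.E (ρ.getLast h) (σ ρ)

/-- A strategy for player 2 (who owns the states where `p1` fails). -/
def IsStrat2 (G : Game S) (σ : List S → S) : Prop :=
  ∀ (ρ : List S) (h : ρ ≠ []), List.Chain' G.E ρ → ¬ G.p1 (ρ.getLast h) →
    G.E (ρ.getLast h) (σ ρ)

/-- A strategy is memoryless if its choice only depends on the last state of the history. -/
def Memoryless (σ : List S → S) : Prop :=
  ∀ (ρ ρ' : List S) (h : ρ ≠ []) (h' : ρ' ≠ []),
    ρ.getLast h = ρ'.getLast h' → σ ρ = σ ρ'

/-- The play `π` is consistent with the player-1 strategy `σ`. -/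
def Consistent1 (G : Game S) (σ : List S → S) (π : ℕ → S) : Prop :=
  ∀ n, G.p1 (π n) → π (n + 1) = σ (hist π n)

/-- The play `π` is consistent with the player-2 strategy `σ`. -/
def Consistent2 (G : Game S) (σ : List S → S) (π : ℕ → S) : Prop :=
  ∀ n, ¬ G.p1 (π n) → π (n + 1) = σ (hist π n)

/-- `σ` is a winning strategy for player 1 from `s₀` for the objective `Obj`:
every consistent play from `s₀` belongs to `Obj`. -/
def Winning1 (G : Game S) (s₀ : S) (σ : List S → S) (Obj : (ℕ → S) → Prop) : Prop :=
  IsStrat1 G σ ∧ ∀ π, IsPlay G s₀ π → Consistent1 G σ π → Obj π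

/-- `σ` is a winning strategy for player 2 from `s₀` against the objective `Obj`:
every consistent play from `s₀` lies outside `Obj`. -/
def Winning2 (G : Game S) (s₀ : S) (σ : List S → S) (Obj : (ℕ → S) → Prop) : Prop :=
  IsStrat2 G σ ∧ ∀ π, IsPlay G s₀ π → Consistent2 G σ π → ¬ Obj π

/-- Average-energy objective: the average-energy of the play is at most `t`. -/
def AvgEnergyLevel (G : Game S) (t : ℚ) : (ℕ → S) → Prop :=
  fun π => AEsupP G π ≤ ((t : ℝ) : EReal)

/-- Mean-payoff objective: the mean-payoff of the play is at most `t`. -/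
def MeanPayOff (G : Game S) (t : ℚ) : (ℕ → S) → Prop :=
  fun π => MPsupP G π ≤ ((t : ℝ) : EReal)

/-- Total-payoff objective: the total-payoff of the play is at most `t`. -/
def TotalPayOff (G : Game S) (t : ℤ) : (ℕ → S) → Prop :=
  fun π => TPsupP G π ≤ ((t : ℝ) : EReal)

/-- Lower-bounded energy objective with initial credit `c₀`. -/
def LowerObj (G : Game S) (c₀ : ℕ) : (ℕ → S) → Prop :=
  fun π => ∀ n, 0 ≤ (c₀ : ℤ) + ELp G π n

/-- Lower- and upper-bounded energy objective with upper bound `U` and initial credit `c₀`. -/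
def LUObj (G : Game S) (U c₀ : ℕ) : (ℕ → S) → Prop :=
  fun π => ∀ n, 0 ≤ (c₀ : ℤ) + ELp G π n ∧ (c₀ : ℤ) + ELp G π n ≤ (U : ℤ)

/-- The game of Lemma `ael_memory`: states `0 = s₁`, `1 = s₂`, `2 = s₃`, where `s₁, s₃`
belong to player 1 and `s₂` to player 2; edges `s₁ → s₂` (weight `1`), `s₂ → s₂` (weight `0`),
`s₂ → s₃` (weight `-1`), `s₃ → s₃` (weight `-1`), `s₃ → s₂` (weight `2`). -/
def memGame : Game (Fin 3) where
  p1 := fun s => s ≠ 1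
  E := fun x y =>
    (x = 0 ∧ y = 1) ∨ (x = 1 ∧ (y = 1 ∨ y = 2)) ∨ (x = 2 ∧ (y = 1 ∨ y = 2))
  w := fun x y =>
    if x = 0 then 1 else if x = 1 then (if y = 2 then -1 else 0)
    else (if y = 2 then -1 else 2)
  succ := by decide


/-! A memoryless strategy of player 2 either always loops at `s₂` or always moves on to `s₃`.
Against the first, player 1 plays `s₁ s₂ s₂ ⋯`, whose energy stays at `1`; against the second,
`s₁ s₂ (s₃ s₂ s₃)^ω`, whose energy runs through `1, 0, 2, 1, 0, 2, …`. Both plays keep the energy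
nonnegative with average energy `1`. With memory, player 2 moves to `s₃` once and loops at `s₂`
from then on: at `s₃` the energy is `0`, so player 1 must return to `s₂`, after which the energy
is `2` forever and the average energy tends to `2 > 1`. -/

open Finset

lemma hist_ne_nil (π : ℕ → S) (n : ℕ) : hist π n ≠ [] := by
  simp [hist]

lemma mem_hist (π : ℕ → S) {i n : ℕ} (h : i ≤ n) : π i ∈ hist π n :=
  List.mem_ofFn.2 ⟨⟨i, by omega⟩, rfl⟩

lemma hist_one (π : ℕ → S) : hist π 1 = [π 0, π 1] := by
  simp [hist, List.ofFn_succ]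

theorem Memoryless.apply_hist {σ : List S → S} (hσ : Memoryless σ) (π : ℕ → S) (n : ℕ) :
    σ (hist π n) = σ [π n] :=
  hσ _ _ (hist_ne_nil π n) (List.cons_ne_nil _ _) (by simp only [hist, List.getLast_ofFn]; simp)

lemma consistent2_of_memoryless {G : Game S} {σ : List S → S} {π : ℕ → S}
    (hσ : Memoryless σ) (h : ∀ n, ¬ G.p1 (π n) → π (n + 1) = σ [π n]) :
    Consistent2 G σ π :=
  fun n hn => (h n hn).trans (hσ.apply_hist π n).symm

lemma ELp_succ (G : Game S) (π : ℕ → S) (n : ℕ) :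
    ELp G π (n + 1) = ELp G π n + G.w (π n) (π (n + 1)) :=
  sum_range_succ _ _

lemma avgEnergyLevel_of_sum_le (G : Game S) (π : ℕ → S) (t : ℚ)
    (h : ∀ n, ∑ i ∈ range n, (ELp G π (i + 1) : ℝ) ≤ t * n) : AvgEnergyLevel G t π := by
  refine limsup_le_of_le (by isBoundedDefault) (eventually_atTop.2 ⟨1, fun n hn => ?_⟩)
  have hn : (0 : ℝ) < n := by exact_mod_cast hn
  exact EReal.coe_le_coe_iff.2 ((div_le_iff₀ hn).2 (h n))

lemma not_avgEnergyLevel_of_le_sum (G : Game S) (π : ℕ → S) {t : ℚ} {c : ℝ}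
    (htc : (t : ℝ) < c) (h : ∀ᶠ n in atTop, c * n ≤ ∑ i ∈ range n, (ELp G π (i + 1) : ℝ)) :
    ¬ AvgEnergyLevel G t π := by
  intro hAE
  have hc : (c : EReal) ≤ AEsupP G π := by
    refine le_limsup_of_frequently_le ?_ (by isBoundedDefault)
    refine ((h.and (eventually_gt_atTop 0)).frequently).mono fun n ⟨hn, hpos⟩ => ?_
    have hpos : (0 : ℝ) < n := by exact_mod_cast hpos
    exact EReal.coe_le_coe_iff.2 ((le_div_iff₀ hpos).2 hn)
  exact absurd (EReal.coe_le_coe_iff.1 (hc.trans hAE)) (not_le.2 htc)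

lemma memGame_not_p1 {s : Fin 3} : ¬ memGame.p1 s ↔ s = 1 :=
  not_not

lemma memGame_E_zero {y : Fin 3} (h : memGame.E 0 y) : y = 1 := by
  simpa [memGame] using h

lemma memGame_E_one {y : Fin 3} (h : memGame.E 1 y) : y = 1 ∨ y = 2 := by
  simpa [memGame] using h

lemma memGame_E_two {y : Fin 3} (h : memGame.E 2 y) : y = 1 ∨ y = 2 := by
  simpa [memGame] using h

def stayPlay : ℕ → Fin 3 := fun n => if n = 0 then 0 else 1

lemma stayPlay_isPlay : IsPlay memGame 0 stayPlay :=
  ⟨rfl, fun n => by rcases n with _ | n <;> simp [stayPlay, memGame]⟩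

lemma ELp_stayPlay (n : ℕ) : ELp memGame stayPlay (n + 1) = 1 := by
  induction n with
  | zero => rfl
  | succ n ih => rw [ELp_succ, ih]; simp [stayPlay, memGame]

lemma stayPlay_mem_objective :
    LowerObj memGame 0 stayPlay ∧ AvgEnergyLevel memGame 1 stayPlay := by
  refine ⟨fun n => ?_, avgEnergyLevel_of_sum_le _ _ _ fun n => ?_⟩
  · rcases n with _ | n
    · simp [ELp]
    · simp [ELp_stayPlay]
  · simp [ELp_stayPlay]

def zigzagPlay : ℕ → Fin 3
  | 0 => 0
  | 1 => 1
  | m + 2 => if m % 3 = 1 then 1 else 2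

lemma mod_three_cases (m : ℕ) :
    (m % 3 = 0 ∧ (m + 1) % 3 = 1) ∨ (m % 3 = 1 ∧ (m + 1) % 3 = 2) ∨
      (m % 3 = 2 ∧ (m + 1) % 3 = 0) := by
  omega

lemma zigzagPlay_isPlay : IsPlay memGame 0 zigzagPlay := by
  refine ⟨rfl, fun n => ?_⟩
  match n with
  | 0 | 1 => simp [zigzagPlay, memGame]
  | m + 2 =>
    rcases mod_three_cases m with ⟨h, h'⟩ | ⟨h, h'⟩ | ⟨h, h'⟩ <;>
      simp [zigzagPlay, memGame, h, h']

lemma zigzagPlay_succ_of_eq_one {n : ℕ} (h : zigzagPlay n = 1) : zigzagPlay (n + 1) = 2 := by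
  match n with
  | 0 => simp [zigzagPlay] at h
  | 1 => rfl
  | m + 2 =>
    rcases mod_three_cases m with ⟨hm, hm'⟩ | ⟨hm, hm'⟩ | ⟨hm, hm'⟩ <;>
      simp_all [zigzagPlay]

lemma ELp_zigzagPlay (n : ℕ) : ELp memGame zigzagPlay (n + 1) = 2 - ((n + 1) % 3 : ℕ) := by
  induction n with
  | zero => rfl
  | succ n ih =>
    rw [ELp_succ, ih]
    match n with
    | 0 => rfl
    | m + 1 =>
      rcases mod_three_cases m with ⟨h, h'⟩ | ⟨h, h'⟩ | ⟨h, h'⟩ <;>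
        simp [zigzagPlay, memGame, h, h'] <;> omega

lemma sum_ELp_zigzagPlay (n : ℕ) :
    ∑ i ∈ range n, ELp memGame zigzagPlay (i + 1) = n - (if n % 3 = 2 then 1 else 0 : ℤ) := by
  induction n with
  | zero => rfl
  | succ n ih =>
    rw [sum_range_succ, ih, ELp_zigzagPlay]
    rcases mod_three_cases n with ⟨h, h'⟩ | ⟨h, h'⟩ | ⟨h, h'⟩ <;> simp [h, h']; omega

lemma zigzagPlay_mem_objective :
    LowerObj memGame 0 zigzagPlay ∧ AvgEnergyLevel memGame 1 zigzagPlay := by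
  refine ⟨fun n => ?_, avgEnergyLevel_of_sum_le _ _ _ fun n => ?_⟩
  · rcases n with _ | n
    · simp [ELp]
    · rw [ELp_zigzagPlay]; omega
  · have h : ∑ i ∈ range n, ELp memGame zigzagPlay (i + 1) ≤ n := by
      rw [sum_ELp_zigzagPlay]; split <;> omega
    simpa using (Int.cast_le (R := ℝ)).2 h

theorem exists_consistent_play_mem_objective_of_memoryless (σ : List (Fin 3) → Fin 3)
    (hσ : IsStrat2 memGame σ) (hm : Memoryless σ) :
    ∃ π, IsPlay memGame 0 π ∧ Consistent2 memGame σ π ∧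
      (LowerObj memGame 0 π ∧ AvgEnergyLevel memGame 1 π) := by
  have hσ1 := hσ [1] (List.cons_ne_nil _ _) (List.isChain_singleton _) (memGame_not_p1.2 rfl)
  rcases memGame_E_one hσ1 with h | h
  · refine ⟨stayPlay, stayPlay_isPlay, consistent2_of_memoryless hm fun n hn => ?_,
      stayPlay_mem_objective⟩
    rw [memGame_not_p1.1 hn, h]
    simp [stayPlay]
  · refine ⟨zigzagPlay, zigzagPlay_isPlay, consistent2_of_memoryless hm fun n hn => ?_,
      zigzagPlay_mem_objective⟩
    rw [memGame_not_p1.1 hn, zigzagPlay_succ_of_eq_one (memGame_not_p1.1 hn), h]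

def visitS3OnceStrategy (ρ : List (Fin 3)) : Fin 3 := if 2 ∈ ρ then 1 else 2

lemma isStrat2_visitS3OnceStrategy : IsStrat2 memGame visitS3OnceStrategy := by
  intro ρ _ _ hp
  rw [memGame_not_p1.1 hp]
  by_cases h : 2 ∈ ρ <;> simp [memGame, visitS3OnceStrategy, h]

lemma visitS3Once_play_prefix {π : ℕ → Fin 3} (hπ : IsPlay memGame 0 π)
    (hc : Consistent2 memGame visitS3OnceStrategy π) : π 1 = 1 ∧ π 2 = 2 := by
  have h1 : π 1 = 1 := memGame_E_zero (hπ.1 ▸ hπ.2 0)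
  refine ⟨h1, ?_⟩
  rw [hc 1 (memGame_not_p1.2 h1), visitS3OnceStrategy, hist_one, hπ.1, h1]
  decide

lemma visitS3Once_play_stays {π : ℕ → Fin 3} (hπ : IsPlay memGame 0 π)
    (hc : Consistent2 memGame visitS3OnceStrategy π) (h3 : π 3 = 1) (n : ℕ) :
    π (n + 3) = 1 := by
  induction n with
  | zero => exact h3
  | succ n ih =>
    rw [show n + 1 + 3 = n + 3 + 1 by ring, hc _ (memGame_not_p1.2 ih), visitS3OnceStrategy,
      if_pos ((visitS3Once_play_prefix hπ hc).2 ▸ mem_hist π (by omega))]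

lemma sum_ELp_of_stays {π : ℕ → Fin 3} (h0 : π 0 = 0) (h1 : π 1 = 1) (h2 : π 2 = 2)
    (hstay : ∀ n, π (n + 3) = 1) (n : ℕ) :
    ∑ i ∈ range (n + 2), ELp memGame π (i + 1) = 2 * n + 1 := by
  have hEL : ∀ n, ELp memGame π (n + 3) = 2 := by
    intro n
    induction n with
    | zero => simp [ELp, sum_range_succ, h0, h1, h2, hstay 0, memGame]
    | succ n ih => rw [ELp_succ, ih, hstay, hstay]; simp [memGame]
  induction n with
  | zero => simp [ELp, sum_range_succ, h0, h1, h2, memGame]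
  | succ n ih => rw [sum_range_succ, ih, hEL]; push_cast; ring

theorem winning2_visitS3OnceStrategy :
    Winning2 memGame 0 visitS3OnceStrategy
      (fun π => LowerObj memGame 0 π ∧ AvgEnergyLevel memGame 1 π) := by
  refine ⟨isStrat2_visitS3OnceStrategy, fun π hπ hc ⟨hL, hAE⟩ => ?_⟩
  obtain ⟨h1, h2⟩ := visitS3Once_play_prefix hπ hc
  rcases memGame_E_two (h2 ▸ hπ.2 2) with h3 | h3
  · refine not_avgEnergyLevel_of_le_sum memGame π (c := 3 / 2) (by norm_num) ?_ hAE
    refine eventually_atTop.2 ⟨6, fun n hn => ?_⟩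
    obtain ⟨m, rfl⟩ := Nat.exists_eq_add_of_le' (show 2 ≤ n by omega)
    have hsum := sum_ELp_of_stays hπ.1 h1 h2 (visitS3Once_play_stays hπ hc h3) m
    have hm : (4 : ℝ) ≤ m := by exact_mod_cast (show 4 ≤ m by omega)
    rw [← Int.cast_sum (R := ℝ), hsum]
    push_cast
    linarith
  · have := hL 3
    simp [ELp, sum_range_succ, hπ.1, h1, h2, h3, memGame] at this

/-- Player 2 needs memory in average-energy games with lower-bounded energy: in `memGame`,
with objective `Lower(0) ∩ AvgEnergyLevel(1)` from `s₁`, (i) no memoryless player-2 strategy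
is winning (each admits a consistent play from `s₁` satisfying the objective), and
(ii) player 2 has a (memoryful) winning strategy from `s₁`. -/
theorem player2_needs_memory :
    (∀ σ : List (Fin 3) → Fin 3, IsStrat2 memGame σ → Memoryless σ →
      ∃ π, IsPlay memGame 0 π ∧ Consistent2 memGame σ π ∧
        (LowerObj memGame 0 π ∧ AvgEnergyLevel memGame 1 π)) ∧
    (∃ σ : List (Fin 3) → Fin 3,
      Winning2 memGame 0 σ (fun π => LowerObj memGame 0 π ∧ AvgEnergyLevel memGame 1 π)) :=
  ⟨exists_consistent_play_mem_objective_of_memoryless, _, winning2_visitS3OnceStrategy⟩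

end
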